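/- arXiv:1210.4325 — 4 statements merged into one kernel-verified Lean document; each statement's English description precedes it below -/
import Mathlib

section
/- Let f = e^{-φ}: ℝⁿ → [0,∞) be a log-concave function which is compactly supported, bounded, and satisfies f(0) > 0. Then M*(f) = M̃*(f): the limit c_n · lim_{ε→0⁺} ( ∫ (G ⋆ (ε·f)) − ∫ G ) / ε exists and equals (2/n) ∫_{ℝⁿ} (Lφ)(x) dγ_n(x). -/
/-!
Substituting `y = x - ε z` in the Asplund product gives `(G ⋆ (ε·f))(x) = G(x) exp (ε ψ_ε(x))`,
where `ψ_ε` is the Legendre transform of `φ + ε |·|² / 2`. If `f` is supported in the ball of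
radius `R`, then `ψ_0 - ε R² / 2 ≤ ψ_ε ≤ ψ_0 = Lφ` and `|ψ_ε(x)| ≤ R |x| + C` for a constant `C`.
So the quotient `(∫ G ⋆ (ε·f) - ∫ G) / ε = ∫ G (exp (ε ψ_ε) - 1) / ε` converges pointwise to
`G · Lφ` and is dominated by `exp (2R|x| + 2C - |x|² / 2)`; dominated convergence, together with
`dγ_n = (2π)^{-n/2} G dx`, gives `c_n ∫ G · Lφ = M*(f)`.
-/

open MeasureTheory Filter Topology Real
open scoped ENNReal NNReal RealInnerProductSpace

noncomputable section

abbrev Euc (n : ℕ) := EuclideanSpace ℝ (Fin n)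

/-- `f` is a log-concave function: nonnegative, not identically zero,
upper semi-continuous, and `f((1-t)x + ty) ≥ f(x)^(1-t) · f(y)^t`. -/
def IsLogConcave {n : ℕ} (f : Euc n → ℝ) : Prop :=
  (∀ x, 0 ≤ f x) ∧ (∃ x, f x ≠ 0) ∧ UpperSemicontinuous f ∧
    ∀ x y : Euc n, ∀ t : ℝ, 0 ≤ t → t ≤ 1 →
      f x ^ (1 - t) * f y ^ t ≤ f ((1 - t) • x + t • y)

/-- `φ = -log f`, i.e. `f = e^{-φ}`, with `φ x = ⊤` exactly where `f x = 0`. -/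
def IsNegLogOf {n : ℕ} (φ : Euc n → EReal) (f : Euc n → ℝ) : Prop :=
  ∀ x, (0 < f x → φ x = ((- Real.log (f x) : ℝ) : EReal)) ∧ (f x = 0 → φ x = ⊤)

/-- The Legendre transform of an `EReal`-valued function:
`(Lφ)(x) = sup_y (⟨x,y⟩ - φ(y))`. -/
def legendre {n : ℕ} (φ : Euc n → EReal) (x : Euc n) : EReal :=
  ⨆ y : Euc n, ((inner ℝ x y : ℝ) : EReal) - φ y

/-- The standard gaussian probability measure `γₙ` on `ℝⁿ`,
with density `(2π)^(-n/2) e^{-|x|²/2}` w.r.t. Lebesgue measure. -/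
def gaussianMeasure (n : ℕ) : Measure (Euc n) :=
  volume.withDensity fun x =>
    ENNReal.ofReal ((2 * π) ^ (-(n : ℝ) / 2) * Real.exp (-‖x‖ ^ 2 / 2))

/-- The nonnegative part of an extended real number, as `ℝ≥0∞`. -/
def erealToENNReal (x : EReal) : ℝ≥0∞ :=
  if x = ⊤ then ⊤ else ENNReal.ofReal x.toReal

/-- Extended-real-valued integral: positive part minus negative part. -/
def eIntegral {α : Type*} [MeasurableSpace α] (μ : Measure α) (h : α → EReal) : EReal :=
  ((∫⁻ a, erealToENNReal (h a) ∂μ : ℝ≥0∞) : EReal) -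
    ((∫⁻ a, erealToENNReal (-h a) ∂μ : ℝ≥0∞) : EReal)

/-- The mean width `M*(f) = (2/n) ∫ (Lφ) dγₙ` of `f = e^{-φ}`. -/
def meanWidth (n : ℕ) (φ : Euc n → EReal) : EReal :=
  ((2 / n : ℝ) : EReal) * eIntegral (gaussianMeasure n) (legendre φ)

/-- The Asplund product (sup-convolution): `(f ⋆ g)(x) = sup_{x₁+x₂=x} f(x₁)g(x₂)`. -/
def asplund {n : ℕ} (f g : Euc n → ℝ) (x : Euc n) : ℝ :=
  ⨆ y : Euc n, f y * g (x - y)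

/-- Homothety of a log-concave function: `(λ·f)(x) = f(x/λ)^λ`. -/
def homoth {n : ℕ} (l : ℝ) (f : Euc n → ℝ) (x : Euc n) : ℝ :=
  f (l⁻¹ • x) ^ l

/-- The gaussian `G(x) = e^{-|x|²/2}`. -/
def gaussG {n : ℕ} (x : Euc n) : ℝ := Real.exp (-‖x‖ ^ 2 / 2)

/-- `∫ G ⋆ (ε·f)` over `ℝⁿ`. -/
def asplundIntegral (n : ℕ) (f : Euc n → ℝ) (ε : ℝ) : ℝ≥0∞ :=
  ∫⁻ x : Euc n, ENNReal.ofReal (asplund gaussG (homoth ε f) x)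

/-- `∫ G` over `ℝⁿ`. -/
def gaussInt (n : ℕ) : ℝ≥0∞ := ∫⁻ x : Euc n, ENNReal.ofReal (gaussG x)

/-- The normalization constant `cₙ = 2/(n(2π)^(n/2))`. -/
def cconst (n : ℕ) : ℝ := 2 / (n * (2 * π) ^ ((n : ℝ) / 2))

/-- Relative volume ratio `V(f) = (∫f / ∫G)^(1/n)` of `f ≥ G`. -/
def volRatio (n : ℕ) (f : Euc n → ℝ) : ℝ :=
  ((∫⁻ x : Euc n, ENNReal.ofReal (f x)).toReal) ^ (1 / (n : ℝ)) / Real.sqrt (2 * π)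

lemma abs_exp_sub_one_le_abs_mul_exp_abs (t : ℝ) : |exp t - 1| ≤ |t| * exp |t| := by
  have h := Complex.norm_exp_sub_sum_le_norm_mul_exp t 1
  simp only [Finset.range_one, Finset.sum_singleton, pow_zero, Nat.factorial_zero, Nat.cast_one,
    div_one, pow_one] at h
  exact_mod_cast h

lemma abs_exp_mul_sub_one_div_le {ε t c : ℝ} (hε0 : 0 < ε) (hε1 : ε ≤ 1) (ht : |t| ≤ c) :
    |(exp (ε * t) - 1) / ε| ≤ exp (2 * c) := by
  have hc : 0 ≤ c := (abs_nonneg t).trans ht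
  have hεt : |ε * t| ≤ ε * c := by rw [abs_mul, abs_of_pos hε0]; gcongr
  have hc_exp : c ≤ exp c := by linarith [add_one_le_exp c]
  rw [abs_div, abs_of_pos hε0, div_le_iff₀ hε0]
  calc |exp (ε * t) - 1| ≤ |ε * t| * exp |ε * t| := abs_exp_sub_one_le_abs_mul_exp_abs _
    _ ≤ (ε * c) * exp c := by
        gcongr
        exact hεt.trans (mul_le_of_le_one_left hc hε1)
    _ ≤ (ε * exp c) * exp c := by gcongr
    _ = exp (2 * c) * ε := by rw [two_mul, exp_add]; ring

lemma tendsto_exp_mul_sub_one_div {g : ℝ → ℝ} {a : ℝ} (hg : Tendsto g (𝓝[>] 0) (𝓝 a)) :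
    Tendsto (fun ε => (exp (ε * g ε) - 1) / ε) (𝓝[>] 0) (𝓝 a) := by
  have hε : Tendsto (fun ε : ℝ => ε) (𝓝[>] 0) (𝓝 0) := tendsto_nhdsWithin_of_tendsto_nhds tendsto_id
  have hεg : Tendsto (fun ε => ε * g ε) (𝓝[>] 0) (𝓝 0) := by simpa using hε.mul hg
  have hrem : Tendsto (fun ε => (exp (ε * g ε) - 1 - ε * g ε) / ε) (𝓝[>] 0) (𝓝 0) := by
    refine squeeze_zero_norm' ?_ (by simpa using hε.mul (hg.pow 2))
    filter_upwards [self_mem_nhdsWithin, hεg.eventually (Metric.closedBall_mem_nhds 0 one_pos)]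
      with ε (hε0 : 0 < ε) hsmall
    rw [dist_zero_right, Real.norm_eq_abs] at hsmall
    rw [norm_div, Real.norm_eq_abs, Real.norm_of_nonneg hε0.le, div_le_iff₀ hε0]
    calc |exp (ε * g ε) - 1 - ε * g ε| ≤ (ε * g ε) ^ 2 := Real.abs_exp_sub_one_sub_id_le hsmall
      _ = ε * g ε ^ 2 * ε := by ring
  rw [← add_zero a]
  refine (hg.add hrem).congr' ?_
  filter_upwards [self_mem_nhdsWithin] with ε (hε0 : 0 < ε)
  field_simp
  ring

lemma integrable_of_abs_le_exp_mul_norm_add_sub_sq {V : Type*} [NormedAddCommGroup V]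
    [InnerProductSpace ℝ V] [FiniteDimensional ℝ V] [MeasurableSpace V] [BorelSpace V]
    {h : V → ℝ} (hm : AEStronglyMeasurable h) (a C : ℝ)
    (hb : ∀ x, |h x| ≤ exp (a * ‖x‖ + C - ‖x‖ ^ 2 / 2)) : Integrable h := by
  have hgauss : Integrable fun v : V => exp (C + a ^ 2) * exp (-(1 / 4) * ‖v‖ ^ 2) := by
    refine Integrable.const_mul ?_ _
    convert (GaussianFourier.integrable_cexp_neg_mul_sq_norm_add (V := V)
      (b := 1 / 4) (by norm_num) 0 0).norm using 2 with v
    rw [Complex.norm_exp]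
    norm_num [← Complex.ofReal_pow]
  refine hgauss.mono hm (.of_forall fun x => ?_)
  rw [Real.norm_eq_abs, Real.norm_of_nonneg (by positivity), ← exp_add]
  exact (hb x).trans (exp_le_exp.2 (by nlinarith [sq_nonneg (a - ‖x‖ / 2)]))

lemma eIntegral_coe {α : Type*} [MeasurableSpace α] {μ : Measure α} {g : α → ℝ}
    (hg : Integrable g μ) : eIntegral μ (fun a => (g a : EReal)) = ((∫ a, g a ∂μ : ℝ) : EReal) := by
  have hpos : ∀ r : ℝ, erealToENNReal r = ENNReal.ofReal r := fun r => by
    simp [erealToENNReal]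
  have hfin : ∀ g : α → ℝ, Integrable g μ → (∫⁻ a, ENNReal.ofReal (g a) ∂μ) ≠ ⊤ := fun g hg =>
    (lintegral_ofReal_le_lintegral_enorm g).trans_lt hg.2 |>.ne
  have hcoe : ∀ A : ℝ≥0∞, A ≠ ⊤ → (A : EReal) = ((A.toReal : ℝ) : EReal) := fun A hA => by
    rw [← EReal.coe_ennreal_toReal hA]
  simp only [eIntegral, ← EReal.coe_neg, hpos]
  rw [integral_eq_lintegral_pos_part_sub_lintegral_neg_part hg, hcoe _ (hfin g hg),
    hcoe _ (hfin (fun a => -g a) hg.neg), ← EReal.coe_sub]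

/-- `ψ_ε`, the Legendre transform of `φ + ε ‖·‖² / 2` where `f = e^{-φ}`; the supremum runs over
the support of `f`, the only place where `φ < ∞`. -/
def penalizedLegendre {n : ℕ} (f : Euc n → ℝ) (ε : ℝ) (x : Euc n) : ℝ :=
  ⨆ z : {z : Euc n // 0 < f z}, ⟪x, z.1⟫ + log (f z) - ε * (‖z.1‖ ^ 2 / 2)

section PenalizedLegendre

variable {n : ℕ} {f : Euc n → ℝ} {R M ε : ℝ}

lemma inner_add_log_sub_le (hR : ∀ z, 0 < f z → ‖z‖ ≤ R) (hM : ∀ z, f z ≤ M) (hε : 0 ≤ ε)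
    (x : Euc n) {z : Euc n} (hz : 0 < f z) :
    ⟪x, z⟫ + log (f z) - ε * (‖z‖ ^ 2 / 2) ≤ R * ‖x‖ + M := by
  have hinner : ⟪x, z⟫ ≤ R * ‖x‖ :=
    (real_inner_le_norm x z).trans (by rw [mul_comm]; gcongr; exact hR z hz)
  have hlog : log (f z) ≤ M := by linarith [log_le_sub_one_of_pos hz, hM z]
  nlinarith [sq_nonneg ‖z‖]

lemma bddAbove_range_inner_add_log_sub (hR : ∀ z, 0 < f z → ‖z‖ ≤ R) (hM : ∀ z, f z ≤ M)
    (hε : 0 ≤ ε) (x : Euc n) :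
    BddAbove (Set.range fun z : {z : Euc n // 0 < f z} =>
      ⟪x, z.1⟫ + log (f z) - ε * (‖z.1‖ ^ 2 / 2)) :=
  ⟨R * ‖x‖ + M, Set.forall_mem_range.2 fun z => inner_add_log_sub_le hR hM hε x z.2⟩

lemma le_penalizedLegendre (hR : ∀ z, 0 < f z → ‖z‖ ≤ R) (hM : ∀ z, f z ≤ M) (hε : 0 ≤ ε)
    (x : Euc n) {z : Euc n} (hz : 0 < f z) :
    ⟪x, z⟫ + log (f z) - ε * (‖z‖ ^ 2 / 2) ≤ penalizedLegendre f ε x :=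
  le_ciSup (bddAbove_range_inner_add_log_sub hR hM hε x) ⟨z, hz⟩

lemma penalizedLegendre_le_of_forall_le (h0 : 0 < f 0) {x : Euc n} {c : ℝ}
    (h : ∀ z, 0 < f z → ⟪x, z⟫ + log (f z) - ε * (‖z‖ ^ 2 / 2) ≤ c) :
    penalizedLegendre f ε x ≤ c :=
  have : Nonempty {z : Euc n // 0 < f z} := ⟨⟨0, h0⟩⟩
  ciSup_le fun z => h z.1 z.2

lemma log_le_penalizedLegendre (hR : ∀ z, 0 < f z → ‖z‖ ≤ R) (hM : ∀ z, f z ≤ M)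
    (h0 : 0 < f 0) (hε : 0 ≤ ε) (x : Euc n) : log (f 0) ≤ penalizedLegendre f ε x := by
  simpa using le_penalizedLegendre hR hM hε x h0

lemma penalizedLegendre_le_penalizedLegendre_zero (hR : ∀ z, 0 < f z → ‖z‖ ≤ R) (hM : ∀ z, f z ≤ M)
    (h0 : 0 < f 0) (hε : 0 ≤ ε) (x : Euc n) : penalizedLegendre f ε x ≤ penalizedLegendre f 0 x :=
  penalizedLegendre_le_of_forall_le h0 fun z hz => by
    have := le_penalizedLegendre hR hM le_rfl x hz
    nlinarith [sq_nonneg ‖z‖]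

lemma penalizedLegendre_zero_sub_le (hR : ∀ z, 0 < f z → ‖z‖ ≤ R) (hM : ∀ z, f z ≤ M)
    (h0 : 0 < f 0) (hε : 0 ≤ ε) (x : Euc n) :
    penalizedLegendre f 0 x - ε * (R ^ 2 / 2) ≤ penalizedLegendre f ε x := by
  rw [sub_le_iff_le_add]
  refine penalizedLegendre_le_of_forall_le h0 fun z hz => ?_
  have hz2 : ‖z‖ ^ 2 ≤ R ^ 2 := pow_le_pow_left₀ (norm_nonneg z) (hR z hz) 2
  have := le_penalizedLegendre hR hM hε x hz
  nlinarith

lemma abs_penalizedLegendre_le (hR : ∀ z, 0 < f z → ‖z‖ ≤ R) (hM : ∀ z, f z ≤ M)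
    (h0 : 0 < f 0) (hε : 0 ≤ ε) (x : Euc n) :
    |penalizedLegendre f ε x| ≤ R * ‖x‖ + (M + |log (f 0)|) := by
  have hRx : 0 ≤ R * ‖x‖ := mul_nonneg (by simpa using hR 0 h0) (norm_nonneg x)
  have hupper := penalizedLegendre_le_of_forall_le h0 fun z hz => inner_add_log_sub_le hR hM hε x hz
  have hlower := log_le_penalizedLegendre hR hM h0 hε x
  rw [abs_le]
  constructor <;> linarith [neg_abs_le (log (f 0)), abs_nonneg (log (f 0)), h0.trans_le (hM 0)]

lemma continuous_penalizedLegendre (hR : ∀ z, 0 < f z → ‖z‖ ≤ R) (hM : ∀ z, f z ≤ M)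
    (h0 : 0 < f 0) (hε : 0 ≤ ε) : Continuous (penalizedLegendre f ε) := by
  refine (LipschitzWith.of_le_add_mul' R fun x y => ?_).continuous
  refine penalizedLegendre_le_of_forall_le h0 fun z hz => ?_
  have hxy : ⟪x - y, z⟫ ≤ R * dist x y :=
    (real_inner_le_norm _ z).trans (by rw [mul_comm, dist_eq_norm]; gcongr; exact hR z hz)
  have := le_penalizedLegendre hR hM hε y hz
  rw [inner_sub_left] at hxy
  linarith

lemma tendsto_penalizedLegendre (hR : ∀ z, 0 < f z → ‖z‖ ≤ R) (hM : ∀ z, f z ≤ M)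
    (h0 : 0 < f 0) (x : Euc n) :
    Tendsto (fun ε => penalizedLegendre f ε x) (𝓝[>] 0) (𝓝 (penalizedLegendre f 0 x)) := by
  have hlow : Tendsto (fun ε => penalizedLegendre f 0 x - ε * (R ^ 2 / 2)) (𝓝[>] 0)
      (𝓝 (penalizedLegendre f 0 x)) :=
    tendsto_nhdsWithin_of_tendsto_nhds (by
      simpa using ((tendsto_id (x := 𝓝 (0 : ℝ))).mul_const (R ^ 2 / 2)).const_sub
        (penalizedLegendre f 0 x))
  refine tendsto_of_tendsto_of_tendsto_of_le_of_le' hlow tendsto_const_nhds ?_ ?_ <;>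
    filter_upwards [self_mem_nhdsWithin] with ε (hε : 0 < ε)
  exacts [penalizedLegendre_zero_sub_le hR hM h0 hε.le x,
    penalizedLegendre_le_penalizedLegendre_zero hR hM h0 hε.le x]

end PenalizedLegendre

section AsplundGaussian

variable {n : ℕ} {f : Euc n → ℝ} {R M ε : ℝ}

lemma gaussG_pos (x : Euc n) : 0 < gaussG x := exp_pos _

@[fun_prop]
lemma continuous_gaussG : Continuous (gaussG : Euc n → ℝ) := by
  unfold gaussG
  fun_prop

lemma gaussG_sub_smul_mul_rpow (x : Euc n) {z : Euc n} (hz : 0 < f z) :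
    gaussG (x - ε • z) * f z ^ ε =
      gaussG x * exp (ε * (⟪x, z⟫ + log (f z) - ε * (‖z‖ ^ 2 / 2))) := by
  rw [gaussG, gaussG, rpow_def_of_pos hz, ← exp_add, ← exp_add, norm_sub_sq_real,
    real_inner_smul_right, norm_smul, Real.norm_eq_abs, mul_pow, sq_abs]
  ring_nf

lemma asplund_gaussG_homoth (hf0 : ∀ x, 0 ≤ f x) (hR : ∀ z, 0 < f z → ‖z‖ ≤ R)
    (hM : ∀ z, f z ≤ M) (h0 : 0 < f 0) (hε : 0 < ε) (x : Euc n) :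
    asplund gaussG (homoth ε f) x = gaussG x * exp (ε * penalizedLegendre f ε x) := by
  have hmono : Monotone fun t => gaussG x * exp (ε * t) := fun s t hst =>
    mul_le_mul_of_nonneg_left (exp_le_exp.2 (mul_le_mul_of_nonneg_left hst hε.le))
      (gaussG_pos x).le
  have hterm : ∀ y,
      gaussG y * homoth ε f (x - y) ≤ gaussG x * exp (ε * penalizedLegendre f ε x) := by
    intro y
    obtain ⟨z, rfl⟩ : ∃ z, y = x - ε • z := ⟨ε⁻¹ • (x - y), by simp [smul_inv_smul₀ hε.ne']⟩
    rw [homoth, sub_sub_cancel, inv_smul_smul₀ hε.ne']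
    rcases (hf0 z).eq_or_lt with hz | hz
    · rw [← hz, zero_rpow hε.ne', mul_zero]
      exact (mul_pos (gaussG_pos x) (exp_pos _)).le
    · rw [gaussG_sub_smul_mul_rpow x hz]
      exact hmono (le_penalizedLegendre hR hM hε.le x hz)
  refine le_antisymm (ciSup_le hterm) ?_
  have : Nonempty {z : Euc n // 0 < f z} := ⟨⟨0, h0⟩⟩
  rw [penalizedLegendre, hmono.map_ciSup_of_continuousAt (by fun_prop)
    (bddAbove_range_inner_add_log_sub hR hM hε.le x)]
  refine ciSup_le fun z => ?_
  rw [← gaussG_sub_smul_mul_rpow x z.2]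
  refine le_ciSup_of_le ⟨_, Set.forall_mem_range.2 hterm⟩ (x - ε • z.1) (le_of_eq ?_)
  rw [homoth, sub_sub_cancel, inv_smul_smul₀ hε.ne']

lemma legendre_eq_penalizedLegendre_zero {φ : Euc n → EReal} (hf0 : ∀ x, 0 ≤ f x)
    (hφ : IsNegLogOf φ f) (hR : ∀ z, 0 < f z → ‖z‖ ≤ R) (hM : ∀ z, f z ≤ M) (h0 : 0 < f 0)
    (x : Euc n) : legendre φ x = penalizedLegendre f 0 x := by
  have hterm : ∀ z, 0 < f z →
      ((⟪x, z⟫ : ℝ) : EReal) - φ z = ((⟪x, z⟫ + log (f z) - 0 * (‖z‖ ^ 2 / 2) : ℝ) : EReal) := by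
    intro z hz
    rw [(hφ z).1 hz, ← EReal.coe_sub]
    congr 1
    ring
  refine le_antisymm (iSup_le fun y => ?_) ?_
  · rcases (hf0 y).eq_or_lt with hy | hy
    · rw [(hφ y).2 hy.symm, EReal.sub_top]
      exact bot_le
    · rw [hterm y hy]
      exact EReal.coe_le_coe_iff.2 (le_penalizedLegendre hR hM le_rfl x hy)
  · have : Nonempty {z : Euc n // 0 < f z} := ⟨⟨0, h0⟩⟩
    rw [penalizedLegendre, EReal.coe_strictMono.monotone.map_ciSup_of_continuousAt
      continuous_coe_real_ereal.continuousAt (bddAbove_range_inner_add_log_sub hR hM le_rfl x)]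
    exact iSup_le fun z => hterm z.1 z.2 ▸ le_iSup (fun y => ((⟪x, y⟫ : ℝ) : EReal) - φ y) z.1

end AsplundGaussian

section MeanWidth

variable {n : ℕ} {f : Euc n → ℝ} {R M ε : ℝ}

lemma integrable_gaussG : Integrable (gaussG : Euc n → ℝ) :=
  integrable_of_abs_le_exp_mul_norm_add_sub_sq continuous_gaussG.aestronglyMeasurable
    0 0 fun x => by simp [gaussG, neg_div]

lemma integrable_gaussG_mul_exp_penalizedLegendre (hR : ∀ z, 0 < f z → ‖z‖ ≤ R)
    (hM : ∀ z, f z ≤ M) (h0 : 0 < f 0) (hε : 0 ≤ ε) :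
    Integrable fun x : Euc n => gaussG x * exp (ε * penalizedLegendre f ε x) := by
  have hcont := continuous_penalizedLegendre hR hM h0 hε
  refine integrable_of_abs_le_exp_mul_norm_add_sub_sq
    (Continuous.aestronglyMeasurable (by fun_prop))
    (ε * R) (ε * (M + |log (f 0)|)) fun x => ?_
  have hψ := (abs_le.1 (abs_penalizedLegendre_le hR hM h0 hε x)).2
  rw [abs_of_pos (mul_pos (gaussG_pos x) (exp_pos _)), gaussG, ← exp_add]
  exact exp_le_exp.2 (by nlinarith)

lemma integrable_gaussG_mul_penalizedLegendre_zero (hR : ∀ z, 0 < f z → ‖z‖ ≤ R)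
    (hM : ∀ z, f z ≤ M) (h0 : 0 < f 0) :
    Integrable fun x : Euc n => gaussG x * penalizedLegendre f 0 x := by
  have hcont := continuous_penalizedLegendre hR hM h0 le_rfl
  refine integrable_of_abs_le_exp_mul_norm_add_sub_sq
    (Continuous.aestronglyMeasurable (by fun_prop))
    R (M + |log (f 0)|) fun x => ?_
  have hψ := abs_penalizedLegendre_le hR hM h0 le_rfl x
  rw [abs_mul, abs_of_pos (gaussG_pos x), gaussG, mul_comm, sub_eq_add_neg, exp_add, neg_div]
  gcongr
  exact hψ.trans (by linarith [add_one_le_exp (R * ‖x‖ + (M + |log (f 0)|))])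

lemma integral_gaussianMeasure (g : Euc n → ℝ) :
    ∫ x, g x ∂gaussianMeasure n = (2 * π) ^ (-(n : ℝ) / 2) * ∫ x, gaussG x * g x := by
  rw [gaussianMeasure, integral_withDensity_eq_integral_toReal_smul (by fun_prop)
    (.of_forall fun _ => ENNReal.ofReal_lt_top), ← integral_const_mul]
  congr 1 with x
  rw [ENNReal.toReal_ofReal (by positivity), smul_eq_mul, gaussG]
  ring

lemma integrable_gaussianMeasure_iff {g : Euc n → ℝ} :
    Integrable g (gaussianMeasure n) ↔ Integrable fun x => gaussG x * g x := by
  rw [gaussianMeasure, integrable_withDensity_iff (by fun_prop)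
    (.of_forall fun _ => ENNReal.ofReal_lt_top),
    ← integrable_const_mul_iff (IsUnit.mk0 _ (rpow_pos_of_pos (by positivity : 0 < 2 * π)
      (-(n : ℝ) / 2)).ne') (fun x => gaussG x * g x)]
  refine integrable_congr (.of_forall fun x => ?_)
  dsimp only
  rw [ENNReal.toReal_ofReal (by positivity), gaussG]
  ring

lemma meanWidth_eq_cconst_mul_integral {φ : Euc n → EReal} (hf0 : ∀ x, 0 ≤ f x)
    (hφ : IsNegLogOf φ f) (hR : ∀ z, 0 < f z → ‖z‖ ≤ R) (hM : ∀ z, f z ≤ M) (h0 : 0 < f 0) :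
    meanWidth n φ = ((cconst n * ∫ x, gaussG x * penalizedLegendre f 0 x : ℝ) : EReal) := by
  have hint : Integrable (penalizedLegendre f 0) (gaussianMeasure n) :=
    integrable_gaussianMeasure_iff.2 (integrable_gaussG_mul_penalizedLegendre_zero hR hM h0)
  rw [meanWidth, funext (legendre_eq_penalizedLegendre_zero hf0 hφ hR hM h0), eIntegral_coe hint,
    integral_gaussianMeasure, ← EReal.coe_mul, cconst, neg_div, rpow_neg (by positivity),
    ← mul_assoc, ← div_eq_mul_inv, div_div]

lemma cconst_div_mul_asplundIntegral_sub_gaussInt (hf0 : ∀ x, 0 ≤ f x)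
    (hR : ∀ z, 0 < f z → ‖z‖ ≤ R) (hM : ∀ z, f z ≤ M) (h0 : 0 < f 0) (hε : 0 < ε) :
    ((cconst n / ε : ℝ) : EReal) * ((asplundIntegral n f ε : EReal) - (gaussInt n : EReal)) =
      ((cconst n * ∫ x, gaussG x * ((exp (ε * penalizedLegendre f ε x) - 1) / ε) : ℝ) : EReal) := by
  have hA := integrable_gaussG_mul_exp_penalizedLegendre hR hM h0 hε.le
  have hasplund : asplundIntegral n f ε =
      ENNReal.ofReal (∫ x, gaussG x * exp (ε * penalizedLegendre f ε x)) := by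
    simp_rw [asplundIntegral, asplund_gaussG_homoth hf0 hR hM h0 hε]
    exact (ofReal_integral_eq_lintegral_ofReal hA
      (.of_forall fun x => (mul_pos (gaussG_pos x) (exp_pos _)).le)).symm
  have hgauss : gaussInt n = ENNReal.ofReal (∫ x : Euc n, gaussG x) :=
    (ofReal_integral_eq_lintegral_ofReal integrable_gaussG
      (.of_forall fun x => (gaussG_pos x).le)).symm
  have hquot : ∫ x, gaussG x * ((exp (ε * penalizedLegendre f ε x) - 1) / ε) =
      ((∫ x, gaussG x * exp (ε * penalizedLegendre f ε x)) - ∫ x : Euc n, gaussG x) / ε := by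
    rw [← integral_sub hA integrable_gaussG, ← integral_div]
    congr 1 with x
    ring
  rw [hasplund, hgauss, EReal.coe_ennreal_ofReal, EReal.coe_ennreal_ofReal,
    max_eq_left (integral_nonneg fun x => (mul_pos (gaussG_pos x) (exp_pos _)).le),
    max_eq_left (integral_nonneg fun x => (gaussG_pos x).le), ← EReal.coe_sub, ← EReal.coe_mul,
    hquot]
  congr 1
  ring

lemma tendsto_integral_gaussG_mul_exp_sub_one_div (hR : ∀ z, 0 < f z → ‖z‖ ≤ R)
    (hM : ∀ z, f z ≤ M) (h0 : 0 < f 0) :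
    Tendsto (fun ε => ∫ x, gaussG x * ((exp (ε * penalizedLegendre f ε x) - 1) / ε))
      (𝓝[>] 0) (𝓝 (∫ x : Euc n, gaussG x * penalizedLegendre f 0 x)) := by
  set C := M + |log (f 0)|
  have hsmall : ∀ᶠ ε in 𝓝[>] (0 : ℝ), ε ∈ Set.Ioc 0 1 := Ioc_mem_nhdsGT one_pos
  refine tendsto_integral_filter_of_dominated_convergence
    (fun x => exp (2 * R * ‖x‖ + 2 * C - ‖x‖ ^ 2 / 2)) ?_ ?_ ?_ ?_
  · filter_upwards [hsmall] with ε hε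
    have hcont := continuous_penalizedLegendre hR hM h0 hε.1.le
    exact Continuous.aestronglyMeasurable (by fun_prop)
  · filter_upwards [hsmall] with ε ⟨hε0, hε1⟩
    refine .of_forall fun x => ?_
    have hq := abs_exp_mul_sub_one_div_le hε0 hε1 (abs_penalizedLegendre_le hR hM h0 hε0.le x)
    rw [Real.norm_eq_abs, abs_mul, abs_of_pos (gaussG_pos x)]
    calc gaussG x * |(exp (ε * penalizedLegendre f ε x) - 1) / ε|
        ≤ gaussG x * exp (2 * (R * ‖x‖ + C)) := by gcongr; exact (gaussG_pos x).le
      _ = exp (2 * R * ‖x‖ + 2 * C - ‖x‖ ^ 2 / 2) := by rw [gaussG, ← exp_add]; ring_nf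
  · exact integrable_of_abs_le_exp_mul_norm_add_sub_sq (by fun_prop) _ _
      fun x => (abs_of_pos (exp_pos _)).le
  · exact .of_forall fun x =>
      (tendsto_exp_mul_sub_one_div (tendsto_penalizedLegendre hR hM h0 x)).const_mul _

end MeanWidth

theorem mean_width_eq_klartag_milman_of_compactly_supported_general
    (n : ℕ) (f : Euc n → ℝ) (φ : Euc n → EReal)
    (hf : IsLogConcave f) (hφ : IsNegLogOf φ f)
    (hsupp : HasCompactSupport f) (hbdd : ∃ M : ℝ, ∀ x, f x ≤ M)
    (h0 : 0 < f 0) :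
    Tendsto
      (fun ε : ℝ =>
        ((cconst n / ε : ℝ) : EReal) *
          ((asplundIntegral n f ε : EReal) - (gaussInt n : EReal)))
      (𝓝[>] (0 : ℝ)) (𝓝 (meanWidth n φ)) := by
  obtain ⟨M, hM⟩ := hbdd
  obtain ⟨R, hR⟩ : ∃ R, ∀ z, 0 < f z → ‖z‖ ≤ R := by
    obtain ⟨R, hR⟩ := hsupp.isBounded.subset_closedBall 0
    exact ⟨R, fun z hz => by simpa using hR (subset_tsupport f hz.ne')⟩
  rw [meanWidth_eq_cconst_mul_integral hf.1 hφ hR hM h0]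
  refine (EReal.tendsto_coe.2
    ((tendsto_integral_gaussG_mul_exp_sub_one_div hR hM h0).const_mul _)).congr' ?_
  filter_upwards [self_mem_nhdsWithin] with ε hε
  exact (cconst_div_mul_asplundIntegral_sub_gaussInt hf.1 hR hM h0 hε).symm

/-- **Lemma.** If `f = e^{-φ}` is log-concave, compactly supported, bounded and
`f(0) > 0`, then `M̃*(f)` exists and equals `M*(f) = (2/n) ∫ Lφ dγₙ`. -/
theorem mean_width_eq_klartag_milman_of_compactly_supported
    (n : ℕ) (hn : 0 < n) (f : Euc n → ℝ) (φ : Euc n → EReal)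
    (hf : IsLogConcave f) (hφ : IsNegLogOf φ f)
    (hsupp : HasCompactSupport f) (hbdd : ∃ M : ℝ, ∀ x, f x ≤ M)
    (h0 : 0 < f 0) :
    Tendsto
      (fun ε : ℝ =>
        ((cconst n / ε : ℝ) : EReal) *
          ((asplundIntegral n f ε : EReal) - (gaussInt n : EReal)))
      (𝓝[>] (0 : ℝ)) (𝓝 (meanWidth n φ)) :=
  mean_width_eq_klartag_milman_of_compactly_supported_general n f φ hf hφ hsupp hbdd h0
end
end

section
/- Let f = e^{-φ} be a log-concave function on ℝⁿ. If (Lφ)(x) < ∞ for every x ∈ ℝⁿ, then ∫_{ℝⁿ} (G ⋆ (ε·f))(x) dx → ∫_{ℝⁿ} G(x) dx as ε → 0⁺. -/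
open MeasureTheory Filter Topology Real
open scoped ENNReal NNReal RealInnerProductSpace

noncomputable section

open scoped Pointwise

/-!
Finiteness of `Lφ` everywhere makes `f` decay like `e^{M_R - R|w|}` for every `R`. Hence
`G(y) (ε·f)(x - y) ≤ e^{εM_R} e^{-(|y|²/2 + R|x - y|)}`, and the infimum over `y` of the exponent
is `|x|²/2` on the ball of radius `R` and linear in `|x|` outside it, so
`∫ G ⋆ (ε·f) ≤ e^{εM_R} (∫ G + e^{-R} ∫ e^{-|x|})`. From below, `(G ⋆ (ε·f))(x) ≥ G(x - εx₀) f(x₀)^ε`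
for any `x₀` with `f(x₀) > 0`, whose integral is `f(x₀)^ε ∫ G`. Let `ε → 0⁺`, then `R → ∞`.
-/

namespace AsplundIntegral

variable {n : ℕ}

lemma norm_le_sum_abs (w : Euc n) : ‖w‖ ≤ ∑ i, |w i| := by
  rw [EuclideanSpace.norm_eq, Real.sqrt_le_left (Finset.sum_nonneg fun i _ => abs_nonneg _)]
  simpa using Finset.sum_sq_le_sq_sum_of_nonneg (s := Finset.univ) (fun i _ => abs_nonneg (w i))

/-- With `d ≥ a - b`, the exponent dominates the Huber function of `a`: `a²/2` for `a ≤ R`, and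
`R a - R²/2 ≥ R + a` for `a ≥ R ≥ 4`. -/
lemma exp_neg_sq_add_mul_le {R a b d : ℝ} (hR : 4 ≤ R) (ha : 0 ≤ a) (hd : 0 ≤ d)
    (habd : a ≤ b + d) :
    Real.exp (-(b ^ 2 / 2 + R * d)) ≤ Real.exp (-a ^ 2 / 2) + Real.exp (-R) * Real.exp (-a) := by
  rw [← Real.exp_add]
  rcases le_total a R with haR | haR
  · have : Real.exp (-(b ^ 2 / 2 + R * d)) ≤ Real.exp (-a ^ 2 / 2) := by
      rw [Real.exp_le_exp]
      nlinarith [mul_le_mul_of_nonneg_right haR hd, sq_nonneg (a - b)]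
    linarith [Real.exp_pos (-R + -a)]
  · have : Real.exp (-(b ^ 2 / 2 + R * d)) ≤ Real.exp (-R + -a) := by
      rw [Real.exp_le_exp]
      nlinarith [sq_nonneg (b - R)]
    linarith [Real.exp_pos (-a ^ 2 / 2)]

lemma integrable_exp_neg_norm {E : Type*} [NormedAddCommGroup E] [NormedSpace ℝ E]
    [FiniteDimensional ℝ E] [MeasurableSpace E] [BorelSpace E] (μ : Measure E)
    [μ.IsAddHaarMeasure] : Integrable (fun x : E => Real.exp (-‖x‖)) μ := by
  rcases subsingleton_or_nontrivial E with _ | _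
  · have : CompactSpace E := Finite.compactSpace
    exact (by fun_prop : Continuous fun x : E => Real.exp (-‖x‖)).integrable_of_hasCompactSupport
      (HasCompactSupport.of_compactSpace _)
  · rw [integrable_fun_norm_addHaar μ (f := fun y => Real.exp (-y))]
    have hd : 0 < Module.finrank ℝ E := Module.finrank_pos
    refine (Real.GammaIntegral_convergent (s := Module.finrank ℝ E) (by exact_mod_cast hd)).congr_fun
      (fun y _ => ?_) measurableSet_Ioi
    rw [smul_eq_mul, mul_comm, ← Real.rpow_natCast, Nat.cast_sub hd, Nat.cast_one]

lemma tendsto_ofReal_mul_nhdsGT {g : ℝ → ℝ} (hg : Tendsto g (𝓝 0) (𝓝 1)) (c : ℝ≥0∞) :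
    Tendsto (fun ε => ENNReal.ofReal (g ε) * c) (𝓝[>] 0) (𝓝 c) := by
  simpa using (ENNReal.Tendsto.mul_const (ENNReal.tendsto_ofReal hg)
    (Or.inl (by simp))).mono_left nhdsWithin_le_nhds

variable {f : Euc n → ℝ} {φ : Euc n → EReal}

lemma inner_add_log_le_legendre (hφ : IsNegLogOf φ f) (z : Euc n) {w : Euc n} (hw : 0 < f w) :
    ((⟪z, w⟫ + Real.log (f w) : ℝ) : EReal) ≤ legendre φ z := by
  have hle : ((⟪z, w⟫ : ℝ) : EReal) - φ w ≤ legendre φ z :=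
    le_iSup (fun y => ((⟪z, y⟫ : ℝ) : EReal) - φ y) w
  rwa [(hφ w).1 hw, ← EReal.coe_sub, sub_neg_eq_add] at hle

/-- Only the values of `Lφ` at the finitely many points `R • s`, `s ∈ {-1, 0, 1}ⁿ`, are needed,
since `⟨R • sign w, w⟩ = R ‖w‖₁ ≥ R ‖w‖`. -/
lemma exists_le_exp_sub_mul_norm (hφ : IsNegLogOf φ f) (hL : ∀ x, legendre φ x < ⊤)
    {R : ℝ} (hR : 0 ≤ R) : ∃ M, ∀ w, f w ≤ Real.exp (M - R * ‖w‖) := by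
  let z : (Fin n → SignType) → Euc n := fun s => R • WithLp.toLp 2 fun i => (s i : ℝ)
  refine ⟨⨆ s, (legendre φ (z s)).toReal, fun w => ?_⟩
  rcases le_or_gt (f w) 0 with hw | hw
  · exact hw.trans (Real.exp_pos _).le
  let s : Fin n → SignType := fun i => SignType.sign (w i)
  have hzw : ⟪z s, w⟫ = R * ∑ i, |w i| := by
    simp only [z, s, PiLp.inner_apply, PiLp.smul_apply, Finset.mul_sum]
    exact Finset.sum_congr rfl fun i _ => by simp [mul_left_comm]
  have hLs : ⟪z s, w⟫ + Real.log (f w) ≤ (legendre φ (z s)).toReal := by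
    have := EReal.toReal_le_toReal (inner_add_log_le_legendre hφ (z s) hw)
      (EReal.coe_ne_bot _) (hL (z s)).ne
    rwa [EReal.toReal_coe] at this
  have hsup : (legendre φ (z s)).toReal ≤ ⨆ s, (legendre φ (z s)).toReal :=
    le_ciSup (f := fun s => (legendre φ (z s)).toReal) (Set.finite_range _).bddAbove s
  rw [← Real.exp_log hw, Real.exp_le_exp]
  nlinarith [mul_le_mul_of_nonneg_left (norm_le_sum_abs w) hR]

variable {ε M R : ℝ}

lemma homoth_le_exp (hf0 : ∀ x, 0 ≤ f x) (hM : ∀ w, f w ≤ Real.exp (M - R * ‖w‖))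
    (hε : 0 < ε) (v : Euc n) : homoth ε f v ≤ Real.exp (ε * M - R * ‖v‖) := by
  have hnorm : ‖ε⁻¹ • v‖ = ε⁻¹ * ‖v‖ := by rw [norm_smul, Real.norm_of_nonneg (inv_pos.2 hε).le]
  calc homoth ε f v ≤ Real.exp (M - R * ‖ε⁻¹ • v‖) ^ ε :=
        Real.rpow_le_rpow (hf0 _) (hM _) hε.le
    _ = Real.exp (ε * M - R * ‖v‖) := by
        rw [← Real.exp_mul, hnorm]
        congr 1
        field_simp

lemma gaussG_mul_homoth_le (hf0 : ∀ x, 0 ≤ f x) (hM : ∀ w, f w ≤ Real.exp (M - R * ‖w‖))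
    (hε : 0 < ε) (hR : 4 ≤ R) (x y : Euc n) :
    gaussG y * homoth ε f (x - y)
      ≤ Real.exp (ε * M) * (gaussG x + Real.exp (-R) * Real.exp (-‖x‖)) :=
  calc gaussG y * homoth ε f (x - y)
      ≤ Real.exp (-‖y‖ ^ 2 / 2) * Real.exp (ε * M - R * ‖x - y‖) :=
        mul_le_mul_of_nonneg_left (homoth_le_exp hf0 hM hε _) (Real.exp_pos _).le
    _ = Real.exp (ε * M) * Real.exp (-(‖y‖ ^ 2 / 2 + R * ‖x - y‖)) := by
        rw [← Real.exp_add, ← Real.exp_add]; ring_nf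
    _ ≤ Real.exp (ε * M) * (gaussG x + Real.exp (-R) * Real.exp (-‖x‖)) := by
        refine mul_le_mul_of_nonneg_left ?_ (Real.exp_pos _).le
        exact exp_neg_sq_add_mul_le hR (norm_nonneg _) (norm_nonneg _)
          (norm_le_norm_add_norm_sub' x y)

lemma asplund_homoth_le (hf0 : ∀ x, 0 ≤ f x) (hM : ∀ w, f w ≤ Real.exp (M - R * ‖w‖))
    (hε : 0 < ε) (hR : 4 ≤ R) (x : Euc n) :
    asplund gaussG (homoth ε f) x
      ≤ Real.exp (ε * M) * (gaussG x + Real.exp (-R) * Real.exp (-‖x‖)) :=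
  ciSup_le fun y => gaussG_mul_homoth_le hf0 hM hε hR x y

lemma gaussG_sub_mul_rpow_le_asplund (hf0 : ∀ x, 0 ≤ f x)
    (hM : ∀ w, f w ≤ Real.exp (M - R * ‖w‖)) (hε : 0 < ε) (hR : 4 ≤ R) (x₀ x : Euc n) :
    gaussG (x - ε • x₀) * f x₀ ^ ε ≤ asplund gaussG (homoth ε f) x := by
  have hbdd : BddAbove (Set.range fun y => gaussG y * homoth ε f (x - y)) :=
    ⟨_, Set.forall_mem_range.2 fun y => gaussG_mul_homoth_le hf0 hM hε hR x y⟩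
  have hhom : homoth ε f (x - (x - ε • x₀)) = f x₀ ^ ε := by
    rw [homoth, sub_sub_cancel, smul_smul, inv_mul_cancel₀ hε.ne', one_smul]
  rw [asplund, ← hhom]
  exact le_ciSup hbdd _

lemma measurable_gaussG : Measurable (gaussG : Euc n → ℝ) := by
  unfold gaussG; fun_prop

lemma asplundIntegral_le (hf0 : ∀ x, 0 ≤ f x) (hM : ∀ w, f w ≤ Real.exp (M - R * ‖w‖))
    (hε : 0 < ε) (hR : 4 ≤ R) :
    asplundIntegral n f ε ≤ ENNReal.ofReal (Real.exp (ε * M)) *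
      (gaussInt n + ENNReal.ofReal (Real.exp (-R)) *
        ∫⁻ x : Euc n, ENNReal.ofReal (Real.exp (-‖x‖))) :=
  calc asplundIntegral n f ε
      ≤ ∫⁻ x : Euc n, ENNReal.ofReal (Real.exp (ε * M)) * (ENNReal.ofReal (gaussG x) +
          ENNReal.ofReal (Real.exp (-R)) * ENNReal.ofReal (Real.exp (-‖x‖))) :=
        lintegral_mono fun x => by
          rw [← ENNReal.ofReal_mul (Real.exp_pos _).le,
            ← ENNReal.ofReal_add (p := gaussG x) (Real.exp_pos _).le (by positivity),
            ← ENNReal.ofReal_mul (Real.exp_pos _).le]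
          exact ENNReal.ofReal_le_ofReal (asplund_homoth_le hf0 hM hε hR x)
    _ = _ := by
        rw [lintegral_const_mul' _ _ ENNReal.ofReal_ne_top,
          lintegral_add_left measurable_gaussG.ennreal_ofReal,
          lintegral_const_mul' _ _ ENNReal.ofReal_ne_top, gaussInt]

lemma ofReal_rpow_mul_gaussInt_le_asplundIntegral (hf0 : ∀ x, 0 ≤ f x) (hM : ∀ w, f w ≤ Real.exp (M - R * ‖w‖))
    (hε : 0 < ε) (hR : 4 ≤ R) (x₀ : Euc n) :
    ENNReal.ofReal (f x₀ ^ ε) * gaussInt n ≤ asplundIntegral n f ε :=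
  calc ENNReal.ofReal (f x₀ ^ ε) * gaussInt n
      = ∫⁻ x : Euc n, ENNReal.ofReal (gaussG (x - ε • x₀) * f x₀ ^ ε) := by
        rw [gaussInt, mul_comm, ← lintegral_mul_const' _ _ ENNReal.ofReal_ne_top,
          ← lintegral_sub_right_eq_self _ (ε • x₀)]
        simp only [ENNReal.ofReal_mul (Real.exp_pos _).le, gaussG]
    _ ≤ asplundIntegral n f ε :=
        lintegral_mono fun x =>
          ENNReal.ofReal_le_ofReal (gaussG_sub_mul_rpow_le_asplund hf0 hM hε hR x₀ x)

lemma gaussInt_le_liminf_asplundIntegral {x₀ : Euc n} (hf0 : ∀ x, 0 ≤ f x) (hx₀ : 0 < f x₀)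
    (hM : ∀ w, f w ≤ Real.exp (M - R * ‖w‖)) (hR : 4 ≤ R) :
    gaussInt n ≤ liminf (asplundIntegral n f) (𝓝[>] 0) := by
  have hlow := tendsto_ofReal_mul_nhdsGT
    (by simpa using (Real.continuousAt_const_rpow hx₀.ne' (b := 0)).tendsto) (gaussInt n)
  rw [← hlow.liminf_eq]
  exact liminf_le_liminf (eventually_mem_nhdsWithin.mono fun ε hε =>
    ofReal_rpow_mul_gaussInt_le_asplundIntegral hf0 hM hε hR x₀)

lemma limsup_asplundIntegral_le (hf0 : ∀ x, 0 ≤ f x)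
    (hM : ∀ w, f w ≤ Real.exp (M - R * ‖w‖)) (hR : 4 ≤ R) :
    limsup (asplundIntegral n f) (𝓝[>] 0) ≤ gaussInt n +
      ENNReal.ofReal (Real.exp (-R)) * ∫⁻ x : Euc n, ENNReal.ofReal (Real.exp (-‖x‖)) := by
  have hup := tendsto_ofReal_mul_nhdsGT (g := fun ε => Real.exp (ε * M))
    (by simpa using (by fun_prop : Continuous fun ε : ℝ => Real.exp (ε * M)).tendsto 0)
    (gaussInt n + ENNReal.ofReal (Real.exp (-R)) *
      ∫⁻ x : Euc n, ENNReal.ofReal (Real.exp (-‖x‖)))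
  rw [← hup.limsup_eq]
  exact limsup_le_limsup (eventually_mem_nhdsWithin.mono fun ε hε =>
    asplundIntegral_le hf0 hM hε hR)

lemma tendsto_gaussInt_add_exp_neg_mul (n : ℕ) :
    Tendsto (fun R : ℝ => gaussInt n +
      ENNReal.ofReal (Real.exp (-R)) * ∫⁻ x : Euc n, ENNReal.ofReal (Real.exp (-‖x‖)))
      atTop (𝓝 (gaussInt n)) := by
  have hC : ∫⁻ x : Euc n, ENNReal.ofReal (Real.exp (-‖x‖)) ≠ ⊤ :=
    (integrable_exp_neg_norm volume).lintegral_lt_top.ne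
  simpa using tendsto_const_nhds.add <| ENNReal.Tendsto.mul_const
    (ENNReal.tendsto_ofReal Real.tendsto_exp_neg_atTop_nhds_zero) (Or.inr hC)

end AsplundIntegral

open AsplundIntegral in
/-- **Lemma.** If `f = e^{-φ}` is log-concave and `(Lφ)(x) < ∞` for every `x`,
then `∫ G ⋆ (ε·f) → ∫ G` as `ε → 0⁺`. -/
theorem asplundIntegral_tendsto_gaussInt_of_legendre_finite
    (n : ℕ) (f : Euc n → ℝ) (φ : Euc n → EReal)
    (hf : IsLogConcave f) (hφ : IsNegLogOf φ f)
    (hL : ∀ x, legendre φ x < ⊤) :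
    Tendsto (fun ε : ℝ => asplundIntegral n f ε) (𝓝[>] (0 : ℝ)) (𝓝 (gaussInt n)) := by
  obtain ⟨hf0, ⟨x₀, hx₀⟩, -, -⟩ := hf
  have hdecay (R : ℝ) (hR : 4 ≤ R) : ∃ M, ∀ w, f w ≤ Real.exp (M - R * ‖w‖) :=
    exists_le_exp_sub_mul_norm hφ hL (by linarith)
  obtain ⟨M₄, hM₄⟩ := hdecay 4 le_rfl
  refine tendsto_of_le_liminf_of_limsup_le
    (gaussInt_le_liminf_asplundIntegral hf0 ((hf0 x₀).lt_of_ne' hx₀) hM₄ le_rfl) ?_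
  refine ge_of_tendsto (tendsto_gaussInt_add_exp_neg_mul n)
    ((eventually_ge_atTop 4).mono fun R hR => ?_)
  obtain ⟨M, hM⟩ := hdecay R hR
  exact limsup_asplundIntegral_le hf0 hM hR
end
end

section
/- Let f = e^{-φ} be a log-concave function on ℝⁿ with (Lφ)(x) < ∞ for all x ∈ ℝⁿ, and let (f_k)_{k≥1} be a sequence of log-concave functions with f_1(x) ≤ f_2(x) ≤ f_3(x) ≤ ⋯ and f_k(x) → f(x) for every x. Then M*(f_k) → M*(f) as k → ∞. -/
open MeasureTheory Filter Topology Real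
open scoped ENNReal NNReal RealInnerProductSpace

noncomputable section

open scoped Pointwise

/-!
Since `f_k ↑ f`, the potentials `φ_k = -log f_k` decrease to `φ`, so the Legendre transforms
`Lφ_k` increase, and by continuity of `log` on `{f > 0}` their supremum is `Lφ`. The positive
parts of `Lφ_k` then converge by monotone convergence and the negative parts by antitone
convergence: they are all bounded by the negative part of `Lφ_0`, which lies below the negative
part of an affine function `x ↦ ⟨x, y⟩ - φ_0(y)` and is therefore `γₙ`-integrable.
-/

lemma erealToENNReal_eq_toENNReal : erealToENNReal = EReal.toENNReal := by
  ext x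
  rfl

section EIntegral

variable {α : Type*} [MeasurableSpace α] {μ : Measure α}

theorem tendsto_eIntegral_of_monotone {h : ℕ → α → EReal} {H : α → EReal}
    (hmeas : ∀ k, AEMeasurable (h k) μ) (hmono : ∀ᵐ a ∂μ, Monotone fun k => h k a)
    (hlim : ∀ᵐ a ∂μ, Tendsto (fun k => h k a) atTop (𝓝 (H a)))
    (hneg : ∫⁻ a, (-h 0 a).toENNReal ∂μ ≠ ∞) :
    Tendsto (fun k => eIntegral μ (h k)) atTop (𝓝 (eIntegral μ H)) := by
  have hpos : Tendsto (fun k => ∫⁻ a, (h k a).toENNReal ∂μ) atTop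
      (𝓝 (∫⁻ a, (H a).toENNReal ∂μ)) :=
    lintegral_tendsto_of_tendsto_of_monotone (fun k => (hmeas k).ereal_toENNReal)
      (hmono.mono fun a ha _ _ hij => EReal.toENNReal_le_toENNReal (ha hij))
      (hlim.mono fun a ha => (EReal.continuous_toENNReal.tendsto _).comp ha)
  have hneg_lim : Tendsto (fun k => ∫⁻ a, (-h k a).toENNReal ∂μ) atTop
      (𝓝 (∫⁻ a, (-H a).toENNReal ∂μ)) :=
    lintegral_tendsto_of_tendsto_of_antitone (fun k => (hmeas k).neg.ereal_toENNReal)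
      (hmono.mono fun a ha _ _ hij =>
        EReal.toENNReal_le_toENNReal (EReal.neg_le_neg_iff.2 (ha hij)))
      hneg (hlim.mono fun a ha => (EReal.continuous_toENNReal.tendsto _).comp ha.neg)
  have hneg_fin : ∫⁻ a, (-H a).toENNReal ∂μ ≠ ∞ := by
    refine ne_top_of_le_ne_top hneg (lintegral_mono_ae ?_)
    filter_upwards [hmono, hlim] with a ha_mono ha_lim
    exact EReal.toENNReal_le_toENNReal
      (EReal.neg_le_neg_iff.2 (ha_mono.ge_of_tendsto ha_lim 0))
  have hadd : ContinuousAt (fun p : EReal × EReal => p.1 + p.2)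
      ((∫⁻ a, (H a).toENNReal ∂μ : ℝ≥0∞), -((∫⁻ a, (-H a).toENNReal ∂μ : ℝ≥0∞) : EReal)) :=
    EReal.continuousAt_add (.inr (by simpa using hneg_fin)) (.inl (EReal.coe_ennreal_ne_bot _))
  simp only [eIntegral, erealToENNReal_eq_toENNReal, sub_eq_add_neg]
  exact hadd.tendsto.comp (((continuous_coe_ennreal_ereal.tendsto _).comp hpos).prodMk_nhds
      ((continuous_coe_ennreal_ereal.tendsto _).comp hneg_lim).neg)

end EIntegral

lemma Continuous.coe_ereal_sub_const {X : Type*} [TopologicalSpace X] {g : X → ℝ}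
    (hg : Continuous g) (c : EReal) : Continuous fun x => (g x : EReal) - c := by
  induction c using EReal.rec with
  | bot => simpa only [EReal.coe_sub_bot] using continuous_const
  | coe r =>
    exact (continuous_coe_real_ereal.comp (hg.sub continuous_const)).congr fun x =>
      EReal.coe_sub (g x) r
  | top => simpa only [EReal.sub_top] using continuous_const

section Legendre

variable {n : ℕ}

lemma legendre_le_legendre {φ ψ : Euc n → EReal} (h : ∀ y, φ y ≤ ψ y) (x : Euc n) :
    legendre ψ x ≤ legendre φ x :=
  iSup_mono fun y => EReal.sub_le_sub le_rfl (h y)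

lemma measurable_legendre (φ : Euc n → EReal) : Measurable (legendre φ) :=
  (lowerSemicontinuous_iSup fun y => ((continuous_id.inner continuous_const).coe_ereal_sub_const
    (φ y)).lowerSemicontinuous).measurable

lemma IsNegLogOf.ge_of_le {φ ψ : Euc n → EReal} {f g : Euc n → ℝ} (hφ : IsNegLogOf φ f)
    (hψ : IsNegLogOf ψ g) (hf : ∀ x, 0 ≤ f x) (hfg : ∀ x, f x ≤ g x) (x : Euc n) :
    ψ x ≤ φ x := by
  rcases (hf x).eq_or_lt with hfx | hfx
  · rw [(hφ x).2 hfx.symm]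
    exact le_top
  · rw [(hφ x).1 hfx, (hψ x).1 (hfx.trans_le (hfg x)), EReal.coe_le_coe_iff, neg_le_neg_iff]
    exact Real.log_le_log hfx (hfg x)

lemma IsNegLogOf.coe_inner_sub_eq {φ : Euc n → EReal} {f : Euc n → ℝ} (hφ : IsNegLogOf φ f)
    (x : Euc n) {y : Euc n} (hy : 0 < f y) :
    ((inner ℝ x y : ℝ) : EReal) - φ y = ((inner ℝ x y + Real.log (f y) : ℝ) : EReal) := by
  rw [(hφ y).1 hy, ← EReal.coe_sub, sub_neg_eq_add]

lemma IsNegLogOf.coe_inner_add_log_le_legendre {φ : Euc n → EReal} {f : Euc n → ℝ}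
    (hφ : IsNegLogOf φ f) (x : Euc n) {y : Euc n} (hy : 0 < f y) :
    ((inner ℝ x y + Real.log (f y) : ℝ) : EReal) ≤ legendre φ x :=
  hφ.coe_inner_sub_eq x hy ▸ le_iSup (fun y => ((inner ℝ x y : ℝ) : EReal) - φ y) y

variable {f : Euc n → ℝ} {φ : Euc n → EReal} {fs : ℕ → Euc n → ℝ} {φs : ℕ → Euc n → EReal}

lemma monotone_legendre_of_monotone (hφs : ∀ k, IsNegLogOf (φs k) (fs k))
    (hfs : ∀ k x, 0 ≤ fs k x) (hmono : ∀ x, Monotone fun k => fs k x) (x : Euc n) :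
    Monotone fun k => legendre (φs k) x := fun i j hij =>
  legendre_le_legendre ((hφs i).ge_of_le (hφs j) (hfs i) fun y => hmono y hij) x

theorem tendsto_legendre_of_monotone (hφ : IsNegLogOf φ f)
    (hφs : ∀ k, IsNegLogOf (φs k) (fs k)) (hfs : ∀ k x, 0 ≤ fs k x)
    (hmono : ∀ x, Monotone fun k => fs k x)
    (hlim : ∀ x, Tendsto (fun k => fs k x) atTop (𝓝 (f x))) (x : Euc n) :
    Tendsto (fun k => legendre (φs k) x) atTop (𝓝 (legendre φ x)) := by
  have hle : ∀ k y, fs k y ≤ f y := fun k y => (hmono y).ge_of_tendsto (hlim y) k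
  have hLmono := monotone_legendre_of_monotone hφs hfs hmono x
  suffices legendre φ x ≤ ⨆ k, legendre (φs k) x by
    refine le_antisymm (iSup_le fun k => ?_) this ▸ tendsto_atTop_iSup hLmono
    exact legendre_le_legendre ((hφs k).ge_of_le hφ (hfs k) (hle k)) x
  refine iSup_le fun y => ?_
  by_cases hy : 0 < f y
  · have hlog : Tendsto (fun k => ((inner ℝ x y + Real.log (fs k y) : ℝ) : EReal)) atTop
        (𝓝 ((inner ℝ x y + Real.log (f y) : ℝ) : EReal)) :=
      EReal.tendsto_coe.2 (tendsto_const_nhds.add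
        ((Real.continuousAt_log hy.ne').tendsto.comp (hlim y)))
    rw [hφ.coe_inner_sub_eq x hy]
    refine le_of_tendsto hlog ?_
    filter_upwards [(hlim y).eventually (eventually_gt_nhds hy)] with k hk
    exact ((hφs k).coe_inner_add_log_le_legendre x hk).trans
      (le_iSup (fun k => legendre (φs k) x) k)
  · have hy0 : f y = 0 := le_antisymm (not_lt.1 hy) ((hfs 0 y).trans (hle 0 y))
    rw [(hφ y).2 hy0, EReal.sub_top]
    exact bot_le

end Legendre

lemma integrable_exp_neg_mul_sq_norm {V : Type*} [NormedAddCommGroup V] [InnerProductSpace ℝ V]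
    [FiniteDimensional ℝ V] [MeasurableSpace V] [BorelSpace V] {b : ℝ} (hb : 0 < b) :
    Integrable fun v : V => rexp (-b * ‖v‖ ^ 2) := by
  refine (GaussianFourier.integrable_cexp_neg_mul_sq_norm_add (V := V) (b := b)
    (by simpa using hb) 0 0).norm.congr (Eventually.of_forall fun v => ?_)
  simp only [zero_mul, add_zero, Complex.norm_exp]
  norm_cast

lemma integrable_one_add_norm_gaussianMeasure (n : ℕ) :
    Integrable (fun x : Euc n => 1 + ‖x‖) (gaussianMeasure n) := by
  set C : ℝ := (2 * π) ^ (-(n : ℝ) / 2)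
  have hC : 0 < C := by positivity
  rw [gaussianMeasure, integrable_withDensity_iff_integrable_smul' (by fun_prop)
    (ae_of_all _ fun _ => ENNReal.ofReal_lt_top)]
  refine ((integrable_exp_neg_mul_sq_norm (V := Euc n) (b := 1 / 4) (by norm_num)).const_mul
    (2 * C)).mono' (by fun_prop) (ae_of_all _ fun x => ?_)
  rw [ENNReal.toReal_ofReal (by positivity), smul_eq_mul, Real.norm_of_nonneg (by positivity)]
  have hlin : 1 + ‖x‖ ≤ 2 * rexp (‖x‖ ^ 2 / 4) := by
    nlinarith [Real.add_one_le_exp (‖x‖ ^ 2 / 4), sq_nonneg (‖x‖ - 1)]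
  have hexp : rexp (-‖x‖ ^ 2 / 2) * rexp (‖x‖ ^ 2 / 4) = rexp (-(1 / 4) * ‖x‖ ^ 2) := by
    rw [← Real.exp_add]
    ring_nf
  calc C * rexp (-‖x‖ ^ 2 / 2) * (1 + ‖x‖)
      ≤ C * rexp (-‖x‖ ^ 2 / 2) * (2 * rexp (‖x‖ ^ 2 / 4)) := by gcongr
    _ = 2 * C * rexp (-(1 / 4) * ‖x‖ ^ 2) := by linear_combination (2 * C) * hexp

lemma IsNegLogOf.lintegral_neg_legendre_ne_top {n : ℕ} {φ : Euc n → EReal} {f : Euc n → ℝ}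
    (hφ : IsNegLogOf φ f) {y : Euc n} (hy : 0 < f y) :
    ∫⁻ x, (-legendre φ x).toENNReal ∂gaussianMeasure n ≠ ∞ := by
  set c := Real.log (f y)
  have hint : Integrable (fun x : Euc n => -(inner ℝ x y + c)) (gaussianMeasure n) := by
    refine ((integrable_one_add_norm_gaussianMeasure n).const_mul (‖y‖ + |c|)).mono'
      (by fun_prop) (ae_of_all _ fun x => ?_)
    calc ‖-(inner ℝ x y + c)‖ ≤ ‖x‖ * ‖y‖ + |c| := by
          rw [norm_neg]
          exact (norm_add_le _ _).trans (add_le_add (norm_inner_le_norm x y) le_rfl)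
      _ ≤ (‖y‖ + |c|) * (1 + ‖x‖) := by nlinarith [norm_nonneg x, norm_nonneg y, abs_nonneg c]
  refine ne_top_of_le_ne_top hint.lintegral_lt_top.ne (lintegral_mono fun x => ?_)
  rw [← EReal.real_coe_toENNReal, EReal.coe_neg]
  exact EReal.toENNReal_le_toENNReal
    (EReal.neg_le_neg_iff.2 (hφ.coe_inner_add_log_le_legendre x hy))

theorem meanWidth_tendsto_of_monotone_general
    (n : ℕ) (f : Euc n → ℝ) (φ : Euc n → EReal)
    (hφ : IsNegLogOf φ f)
    (fs : ℕ → Euc n → ℝ) (φs : ℕ → Euc n → EReal)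
    (hfs : ∀ k, IsLogConcave (fs k)) (hφs : ∀ k, IsNegLogOf (φs k) (fs k))
    (hmono : ∀ k x, fs k x ≤ fs (k + 1) x)
    (hlim : ∀ x, Tendsto (fun k => fs k x) atTop (𝓝 (f x))) :
    Tendsto (fun k => meanWidth n (φs k)) atTop (𝓝 (meanWidth n φ)) := by
  have hfs0 : ∀ k x, 0 ≤ fs k x := fun k => (hfs k).1
  have hmono' : ∀ x, Monotone fun k => fs k x := fun x =>
    monotone_nat_of_le_succ fun k => hmono k x
  obtain ⟨y, hy⟩ := (hfs 0).2.1
  have hneg := (hφs 0).lintegral_neg_legendre_ne_top ((hfs0 0 y).lt_of_ne' hy)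
  have hint := tendsto_eIntegral_of_monotone
    (fun k => (measurable_legendre (φs k)).aemeasurable)
    (ae_of_all _ (monotone_legendre_of_monotone hφs hfs0 hmono'))
    (ae_of_all _ (tendsto_legendre_of_monotone hφ hφs hfs0 hmono' hlim)) hneg
  exact EReal.Tendsto.const_mul hint (.inl (EReal.coe_ne_bot _)) (.inl (EReal.coe_ne_top _))

/-- **Proposition (monotone convergence for `M*`).** If `f = e^{-φ}` is log-concave with
`Lφ < ∞` everywhere and `f_k` is a nondecreasing sequence of log-concave functions
converging pointwise to `f`, then `M*(f_k) → M*(f)`. -/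
theorem meanWidth_tendsto_of_monotone
    (n : ℕ) (hn : 0 < n) (f : Euc n → ℝ) (φ : Euc n → EReal)
    (hf : IsLogConcave f) (hφ : IsNegLogOf φ f)
    (hL : ∀ x, legendre φ x < ⊤)
    (fs : ℕ → Euc n → ℝ) (φs : ℕ → Euc n → EReal)
    (hfs : ∀ k, IsLogConcave (fs k)) (hφs : ∀ k, IsNegLogOf (φs k) (fs k))
    (hmono : ∀ k x, fs k x ≤ fs (k + 1) x)
    (hlim : ∀ x, Tendsto (fun k => fs k x) atTop (𝓝 (f x))) :
    Tendsto (fun k => meanWidth n (φs k)) atTop (𝓝 (meanWidth n φ)) :=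
  meanWidth_tendsto_of_monotone_general n f φ hφ fs φs hfs hφs hmono hlim

end
end

section
/- Let f: ℝⁿ → [0,∞) be log-concave with f(0) ≥ 1, and for β > 0 let K_{f,β} = { x ∈ ℝⁿ : f(x) ≥ e^{−βn} }. Then for every β > 0 the Lebesgue measure satisfies |K_{f,β}| ≤ (e · max(1,β))ⁿ · ∫_{ℝⁿ} f(x) dx; in particular |K_{f,1}| · e^{−n} ≤ ∫_{ℝⁿ} f. -/
open MeasureTheory Filter Topology Real
open scoped ENNReal NNReal RealInnerProductSpace

noncomputable section

open scoped Pointwise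

/-!
Markov's inequality gives `e^{-n} |K_{f,1}| ≤ ∫ f`. For the general level, log-concavity between
`0` and `y` together with `f 0 ≥ 1` gives `f (t • y) ≥ f y ^ t` for `t ∈ [0, 1]`, so with
`t = 1 / max 1 β` the dilate `t • K_{f,β}` lies in `K_{f,1}`; its volume is `tⁿ |K_{f,β}|`.
-/

theorem ofReal_mul_measure_le_lintegral {α : Type*} [MeasurableSpace α] {μ : Measure α}
    {f : α → ℝ} (hf : AEMeasurable f μ) (c : ℝ) :
    ENNReal.ofReal c * μ {x | c ≤ f x} ≤ ∫⁻ x, ENNReal.ofReal (f x) ∂μ :=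
  calc ENNReal.ofReal c * μ {x | c ≤ f x}
      ≤ ENNReal.ofReal c * μ {x | ENNReal.ofReal c ≤ ENNReal.ofReal (f x)} := by
        gcongr
        exact ENNReal.ofReal_le_ofReal
    _ ≤ ∫⁻ x, ENNReal.ofReal (f x) ∂μ :=
        mul_meas_ge_le_lintegral₀ hf.ennreal_ofReal _

namespace IsLogConcave

variable {n : ℕ} {f : Euc n → ℝ}

theorem measurable (hf : IsLogConcave f) : Measurable f :=
  hf.2.2.1.measurable

theorem le_apply_smul_of_one_le_apply_zero (hf : IsLogConcave f) (h0 : 1 ≤ f 0)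
    {t : ℝ} (ht0 : 0 ≤ t) (ht1 : t ≤ 1) (y : Euc n) : f y ^ t ≤ f (t • y) :=
  calc f y ^ t = 1 * f y ^ t := (one_mul _).symm
    _ ≤ f 0 ^ (1 - t) * f y ^ t := by
        gcongr
        · exact rpow_nonneg (hf.1 y) t
        · exact one_le_rpow h0 (by linarith)
    _ ≤ f ((1 - t) • (0 : Euc n) + t • y) := hf.2.2.2 0 y t ht0 ht1
    _ = f (t • y) := by rw [smul_zero, zero_add]

theorem smul_superlevel_subset (hf : IsLogConcave f) (h0 : 1 ≤ f 0)
    {t : ℝ} (ht0 : 0 ≤ t) (ht1 : t ≤ 1) (s : ℝ) :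
    t • {x | exp (-s) ≤ f x} ⊆ {x | exp (-(t * s)) ≤ f x} := by
  rintro _ ⟨y, hy, rfl⟩
  calc exp (-(t * s)) = exp (-s) ^ t := by rw [← exp_mul]; ring_nf
    _ ≤ f y ^ t := rpow_le_rpow (exp_pos _).le hy ht0
    _ ≤ f (t • y) := hf.le_apply_smul_of_one_le_apply_zero h0 ht0 ht1 y

theorem ofReal_pow_mul_volume_superlevel_le (hf : IsLogConcave f) (h0 : 1 ≤ f 0)
    {t : ℝ} (ht0 : 0 ≤ t) (ht1 : t ≤ 1) (s : ℝ) :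
    ENNReal.ofReal (t ^ n) * volume {x | exp (-s) ≤ f x} ≤
      volume {x | exp (-(t * s)) ≤ f x} :=
  calc ENNReal.ofReal (t ^ n) * volume {x | exp (-s) ≤ f x}
      = volume (t • {x | exp (-s) ≤ f x}) := by
        rw [Measure.addHaar_smul_of_nonneg _ ht0, finrank_euclideanSpace_fin]
    _ ≤ volume {x | exp (-(t * s)) ≤ f x} :=
        measure_mono (hf.smul_superlevel_subset h0 ht0 ht1 s)

end IsLogConcave

theorem volume_superlevel_set_le_general
    (n : ℕ) (f : Euc n → ℝ) (hf : IsLogConcave f) (h0 : 1 ≤ f 0)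
    (β : ℝ) :
    volume {x : Euc n | Real.exp (-(β * n)) ≤ f x} ≤
        ENNReal.ofReal ((Real.exp 1 * max 1 β) ^ n) *
          ∫⁻ x : Euc n, ENNReal.ofReal (f x) ∧
      volume {x : Euc n | Real.exp (-((n : ℝ))) ≤ f x} * ENNReal.ofReal (Real.exp (-(n : ℝ))) ≤
        ∫⁻ x : Euc n, ENNReal.ofReal (f x) := by
  have markov := ofReal_mul_measure_le_lintegral hf.measurable.aemeasurable (μ := volume) (exp (-n))
  refine ⟨?_, by rwa [mul_comm]⟩
  set m := max 1 β
  have hm : 0 < m := lt_max_of_lt_left one_pos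
  have ht1 : m⁻¹ ≤ 1 := inv_le_one_of_one_le₀ (le_max_left 1 β)
  have hβm : m⁻¹ * (β * n) ≤ n := by
    rw [← mul_assoc]
    exact mul_le_of_le_one_left n.cast_nonneg ((inv_mul_le_one₀ hm).2 (le_max_right 1 β))
  have hunit : ENNReal.ofReal ((exp 1 * m) ^ n) * ENNReal.ofReal (exp (-n)) *
      ENNReal.ofReal (m⁻¹ ^ n) = 1 := by
    rw [← ENNReal.ofReal_mul (by positivity), ← ENNReal.ofReal_mul (by positivity), exp_neg,
      ← exp_one_pow, mul_pow, inv_pow]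
    field_simp
    exact ENNReal.ofReal_one
  calc volume {x | exp (-(β * n)) ≤ f x}
      = ENNReal.ofReal ((exp 1 * m) ^ n) * (ENNReal.ofReal (exp (-n)) *
          (ENNReal.ofReal (m⁻¹ ^ n) * volume {x | exp (-(β * n)) ≤ f x})) := by
        rw [← mul_assoc, ← mul_assoc, hunit, one_mul]
    _ ≤ ENNReal.ofReal ((exp 1 * m) ^ n) * (ENNReal.ofReal (exp (-n)) *
          volume {x | exp (-n) ≤ f x}) := by
        gcongr
        refine (hf.ofReal_pow_mul_volume_superlevel_le h0 (inv_nonneg.2 hm.le) ht1 _).trans ?_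
        exact measure_mono fun x hx => (exp_le_exp.2 (neg_le_neg hβm)).trans hx
    _ ≤ ENNReal.ofReal ((exp 1 * m) ^ n) * ∫⁻ x, ENNReal.ofReal (f x) := by gcongr

/-- For log-concave `f` with `f(0) ≥ 1` and `β > 0`, the superlevel set
`K_{f,β} = {x : f(x) ≥ e^{-βn}}` satisfies `|K_{f,β}| ≤ (e max(1,β))ⁿ ∫ f`;
in particular `|K_{f,1}| e^{-n} ≤ ∫ f`. -/
theorem volume_superlevel_set_le
    (n : ℕ) (f : Euc n → ℝ) (hf : IsLogConcave f) (h0 : 1 ≤ f 0)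
    (β : ℝ) (hβ : 0 < β) :
    volume {x : Euc n | Real.exp (-(β * n)) ≤ f x} ≤
        ENNReal.ofReal ((Real.exp 1 * max 1 β) ^ n) *
          ∫⁻ x : Euc n, ENNReal.ofReal (f x) ∧
      volume {x : Euc n | Real.exp (-((n : ℝ))) ≤ f x} * ENNReal.ofReal (Real.exp (-(n : ℝ))) ≤
        ∫⁻ x : Euc n, ENNReal.ofReal (f x) :=
  volume_superlevel_set_le_general n f hf h0 β

end
end
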